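/- arXiv:2312.16239 — 2 statements merged into one kernel-verified Lean document; each statement's English description precedes it below -/
import Mathlib

section
/- The renaming action on supported functions is well-defined: for two freshening pairs (ρ₁,ρ₂) and (ρ₁',ρ₂') for nontriv(ρ) with respect to supp(x) ∪ S_f, we have (ρ₂∘ρ)·f(ρ₁·x) = (ρ₂'∘ρ)·f(ρ₁'·x). -/
abbrev Atom := ℕ

def RenMonoid : Submonoid (Function.End Atom) where
  carrier := {ρ | {a | ρ a ≠ a}.Finite}
  one_mem' := Set.Finite.subset Set.finite_empty (fun _ ha => (ha rfl).elim)
  mul_mem' := by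
    intro ρ ρ' hρ hρ'
    refine Set.Finite.subset (Set.Finite.union hρ hρ') fun a ha => ?_
    by_contra h
    simp only [Set.mem_union, Set.mem_setOf_eq, not_or, not_not] at h
    exact ha (show ρ (ρ' a) = a by rw [h.2, h.1])

abbrev Ren : Type := RenMonoid

def rdom (ρ : Ren) : Set Atom := {a | ρ.1 a ≠ a}
def rimg (ρ : Ren) : Set Atom := ρ.1 '' rdom ρ
def rnontriv (ρ : Ren) : Set Atom := rdom ρ ∪ rimg ρ

def RSupports {X : Type*} [MulAction Ren X] (A : Set Atom) (x : X) : Prop :=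
  ∀ ρ ρ' : Ren, (∀ a ∈ A, ρ.1 a = ρ'.1 a) → ρ • x = ρ' • x

def RIsLeastSupport {X : Type*} [MulAction Ren X] (S : Set Atom) (x : X) : Prop :=
  RSupports S x ∧ ∀ A, RSupports A x → S ⊆ A

def IsPermissionSet (S : Set Atom) : Prop :=
  ∃ A B : Finset Atom, (↑A : Set Atom) ⊆ {n | n % 2 = 1} ∧ (↑B : Set Atom) ⊆ {n | n % 2 = 0} ∧
    S = ({n : Atom | n % 2 = 0} ∪ ↑A) \ ↑B

def atomRen (a b : Atom) : Ren :=
  ⟨fun c => if c = a then b else c, by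
    show {c | (if c = a then b else c) ≠ c}.Finite
    apply Set.Finite.subset (Set.finite_singleton a)
    intro c hc
    by_contra hn
    simp only [Set.mem_singleton_iff] at hn
    exact hc (by simp [if_neg hn])⟩

def FunSupportedBy {X Y : Type*} [MulAction Ren X] [MulAction Ren Y]
    (S : Set Atom) (f : X → Y) : Prop :=
  ∀ (ρ : Ren) (x : X), rdom ρ ∩ S = ∅ → ρ • f x = f (ρ • x)

def FreshPair (ρ₁ ρ₂ : Ren) (A S : Set Atom) : Prop :=
  rdom ρ₁ = A ∧ rdom ρ₂ = rimg ρ₁ ∧ (∀ a ∈ A, ρ₂.1 (ρ₁.1 a) = a) ∧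
    rdom ρ₂ ∩ (S ∪ A) = ∅

instance : SMul Ren Atom := ⟨fun ρ a => ρ.1 a⟩
instance : MulAction Ren Atom where
  one_smul _ := rfl
  mul_smul _ _ _ := rfl

/-!
Write `B = rdom ρ₂` and `B' = rdom ρ₂'`. The renaming `c`, equal to `ρ₁' ∘ ρ₂` on `B` and the
identity elsewhere, avoids `S_f`, and `c * ρ₁` agrees with `ρ₁'` on `supp x`; hence
`c • f (ρ₁ • x) = f (ρ₁' • x)`. It remains to see `(ρ₂ * ρ) • y = (ρ₂' * ρ * c) • y` for
`y = f (ρ₁ • x)`. These two renamings agree off `B' \ B`, and `e`, equal to `ρ₂'` on `B' \ B` and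
the identity elsewhere, fixes `y` (again by support) and has image disjoint from `B' \ B`;
hence both renamings act on `y = e • y` in the same way.
-/

namespace Ren

lemma mul_apply (σ τ : Ren) (a : Atom) : (σ * τ).1 a = σ.1 (τ.1 a) := rfl

lemma apply_eq_of_notMem_rdom {τ : Ren} {a : Atom} (ha : a ∉ rdom τ) : τ.1 a = a :=
  not_not.mp ha

lemma apply_mem_rnontriv {τ : Ren} {a : Atom} (ha : τ.1 a ≠ a) : τ.1 a ∈ rnontriv τ :=
  Or.inr ⟨a, ha, rfl⟩

lemma apply_eq_of_notMem_rnontriv {τ : Ren} {a : Atom} (ha : a ∉ rnontriv τ) : τ.1 a = a :=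
  apply_eq_of_notMem_rdom fun h => ha (Or.inl h)

open Classical in
noncomputable def restrict (ρ : Ren) (T : Set Atom) : Ren :=
  ⟨fun a => if a ∈ T then ρ.1 a else a, ρ.2.subset fun a ha => by
    by_cases hT : a ∈ T <;> simp_all⟩

variable (ρ : Ren) {T : Set Atom} {a : Atom}

lemma restrict_apply_of_mem (ha : a ∈ T) : (ρ.restrict T).1 a = ρ.1 a := by
  simp [restrict, ha]

lemma restrict_apply_of_notMem (ha : a ∉ T) : (ρ.restrict T).1 a = a := by
  simp [restrict, ha]

lemma rdom_restrict_subset (T : Set Atom) : rdom (ρ.restrict T) ⊆ T := fun _ ha => by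
  by_contra hT
  exact ha (ρ.restrict_apply_of_notMem hT)

end Ren

lemma FunSupportedBy.smul_apply_eq {X Y : Type*} [MulAction Ren X] [MulAction Ren Y]
    {Sf A : Set Atom} {f : X → Y} (hf : FunSupportedBy Sf f) {x : X} (hx : RSupports A x)
    {σ τ τ' : Ren} (hσ : Disjoint (rdom σ) Sf) (hagree : ∀ a ∈ A, (σ * τ).1 a = τ'.1 a) :
    σ • f (τ • x) = f (τ' • x) := by
  rw [hf σ _ (Set.disjoint_iff_inter_eq_empty.mp hσ), ← mul_smul, hx _ _ hagree]

lemma smul_eq_smul_of_eqOn_compl {Y : Type*} [MulAction Ren Y] {T : Set Atom} {e F G : Ren}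
    {y : Y} (hey : e • y = y) (he : ∀ s, e.1 s ∉ T) (hFG : ∀ t ∉ T, F.1 t = G.1 t) :
    F • y = G • y := by
  have hFGe : F * e = G * e := Subtype.ext <| funext fun s => hFG _ (he s)
  rw [← hey, ← mul_smul, hFGe, mul_smul]

namespace FreshPair

variable {ρ₁ ρ₂ ρ₁' ρ₂' : Ren} {A S : Set Atom} {a : Atom}

lemma disjoint (h : FreshPair ρ₁ ρ₂ A S) : Disjoint (rdom ρ₂) (S ∪ A) :=
  Set.disjoint_iff_inter_eq_empty.mpr h.2.2.2

lemma notMem_of_mem (h : FreshPair ρ₁ ρ₂ A S) (ha : a ∈ rdom ρ₂) : a ∉ S ∧ a ∉ A := by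
  simpa using h.disjoint.notMem_of_mem_left ha

lemma left_apply_of_notMem (h : FreshPair ρ₁ ρ₂ A S) (ha : a ∉ A) : ρ₁.1 a = a :=
  Ren.apply_eq_of_notMem_rdom (h.1 ▸ ha)

lemma right_apply_of_mem (h : FreshPair ρ₁ ρ₂ A S) (ha : a ∈ A) : ρ₂.1 a = a :=
  Ren.apply_eq_of_notMem_rdom fun hd => (h.notMem_of_mem hd).2 ha

lemma left_apply_mem_rdom (h : FreshPair ρ₁ ρ₂ A S) (ha : a ∈ A) : ρ₁.1 a ∈ rdom ρ₂ :=
  h.2.1 ▸ ⟨a, h.1 ▸ ha, rfl⟩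

lemma right_apply_mem (h : FreshPair ρ₁ ρ₂ A S) (hb : a ∈ rdom ρ₂) : ρ₂.1 a ∈ A := by
  rw [h.2.1] at hb
  obtain ⟨a, ha, rfl⟩ := hb
  rw [h.2.2.1 a (h.1 ▸ ha)]
  exact h.1 ▸ ha

lemma restrict_mul_apply (h : FreshPair ρ₁ ρ₂ A S) (h' : FreshPair ρ₁' ρ₂' A S) (ha : a ∈ S) :
    ((ρ₁' * ρ₂).restrict (rdom ρ₂) * ρ₁).1 a = ρ₁'.1 a := by
  by_cases hA : a ∈ A
  · rw [Ren.mul_apply, Ren.restrict_apply_of_mem _ (h.left_apply_mem_rdom hA), Ren.mul_apply,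
      h.2.2.1 a hA]
  · rw [Ren.mul_apply, h.left_apply_of_notMem hA, h'.left_apply_of_notMem hA,
      Ren.restrict_apply_of_notMem _ fun hd => (h.notMem_of_mem hd).1 ha]

lemma restrict_diff_mul_apply (h : FreshPair ρ₁ ρ₂ A S) (h' : FreshPair ρ₁' ρ₂' A S)
    (ha : a ∈ S) : (ρ₂'.restrict (rdom ρ₂' \ rdom ρ₂) * ρ₁).1 a = ρ₁.1 a := by
  rw [Ren.mul_apply, Ren.restrict_apply_of_notMem]
  by_cases hA : a ∈ A
  · exact fun hd => hd.2 (h.left_apply_mem_rdom hA)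
  · rw [h.left_apply_of_notMem hA]
    exact fun hd => (h'.notMem_of_mem hd.1).1 ha

lemma restrict_diff_apply_notMem (h : FreshPair ρ₁ ρ₂ A S) (T : Set Atom) (s : Atom) :
    (ρ₂.restrict (rdom ρ₂ \ T)).1 s ∉ rdom ρ₂ \ T := by
  by_cases hs : s ∈ rdom ρ₂ \ T
  · rw [Ren.restrict_apply_of_mem _ hs]
    exact fun hd => (h.notMem_of_mem hd.1).2 (h.right_apply_mem hs.1)
  · rwa [Ren.restrict_apply_of_notMem _ hs]

lemma mul_restrict_apply {ρ : Ren} (h : FreshPair ρ₁ ρ₂ (rnontriv ρ) S)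
    (h' : FreshPair ρ₁' ρ₂' (rnontriv ρ) S) {t : Atom} (ht : t ∉ rdom ρ₂' \ rdom ρ₂) :
    (ρ₂' * ρ * (ρ₁' * ρ₂).restrict (rdom ρ₂)).1 t = (ρ₂ * ρ).1 t := by
  simp only [Ren.mul_apply]
  by_cases hB : t ∈ rdom ρ₂
  · obtain ⟨a, ha, rfl⟩ : t ∈ rimg ρ₁ := h.2.1 ▸ hB
    have hA : a ∈ rnontriv ρ := h.1 ▸ ha
    have hB' := h'.left_apply_mem_rdom hA
    rw [Ren.restrict_apply_of_mem _ hB, Ren.mul_apply, h.2.2.1 a hA,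
      Ren.apply_eq_of_notMem_rnontriv (h'.notMem_of_mem hB').2, h'.2.2.1 a hA,
      Ren.apply_eq_of_notMem_rnontriv (h.notMem_of_mem hB).2, h.2.2.1 a hA]
  · have hB' : t ∉ rdom ρ₂' := fun hd => ht ⟨hd, hB⟩
    rw [Ren.restrict_apply_of_notMem _ hB]
    by_cases hρt : ρ.1 t = t
    · rw [hρt, Ren.apply_eq_of_notMem_rdom hB', Ren.apply_eq_of_notMem_rdom hB]
    · have hA := Ren.apply_mem_rnontriv hρt
      rw [h'.right_apply_of_mem hA, h.right_apply_of_mem hA]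

end FreshPair

theorem stmt8_general {X Y : Type*} [MulAction Ren X] [MulAction Ren Y]
    (suppX : X → Set Atom)
    (hX : ∀ x, RIsLeastSupport (suppX x) x)
    (f : X → Y) (Sf : Set Atom) (hf : FunSupportedBy Sf f)
    (ρ : Ren) (x : X)
    (ρ₁ ρ₂ : Ren) (h : FreshPair ρ₁ ρ₂ (rnontriv ρ) (suppX x ∪ Sf))
    (ρ₁' ρ₂' : Ren) (h' : FreshPair ρ₁' ρ₂' (rnontriv ρ) (suppX x ∪ Sf)) :
    (ρ₂ * ρ) • f (ρ₁ • x) = (ρ₂' * ρ) • f (ρ₁' • x) := by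
  have hfresh : Disjoint (rdom ρ₂) Sf := h.disjoint.mono_right (by grind)
  have hfresh' : Disjoint (rdom ρ₂') Sf := h'.disjoint.mono_right (by grind)
  set c := (ρ₁' * ρ₂).restrict (rdom ρ₂)
  set e := ρ₂'.restrict (rdom ρ₂' \ rdom ρ₂)
  have hc : c • f (ρ₁ • x) = f (ρ₁' • x) :=
    hf.smul_apply_eq (hX x).1 (hfresh.mono_left (Ren.rdom_restrict_subset _ _))
      fun _ ha => h.restrict_mul_apply h' (Or.inl ha)
  have he : e • f (ρ₁ • x) = f (ρ₁ • x) :=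
    hf.smul_apply_eq (hX x).1
      (hfresh'.mono_left ((Ren.rdom_restrict_subset _ _).trans Set.sdiff_subset))
      fun _ ha => h.restrict_diff_mul_apply h' (Or.inl ha)
  calc (ρ₂ * ρ) • f (ρ₁ • x)
      = (ρ₂' * ρ * c) • f (ρ₁ • x) :=
        (smul_eq_smul_of_eqOn_compl he (h'.restrict_diff_apply_notMem _)
          fun _ ht => h.mul_restrict_apply h' ht).symm
    _ = (ρ₂' * ρ) • f (ρ₁' • x) := by rw [mul_smul, hc]

theorem stmt8 {X Y : Type*} [MulAction Ren X] [MulAction Ren Y]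
    (suppX : X → Set Atom) (suppY : Y → Set Atom)
    (hX : ∀ x, RIsLeastSupport (suppX x) x) (hY : ∀ y, RIsLeastSupport (suppY y) y)
    (f : X → Y) (Sf : Set Atom) (hSf : IsPermissionSet Sf) (hf : FunSupportedBy Sf f)
    (ρ : Ren) (x : X)
    (ρ₁ ρ₂ : Ren) (h : FreshPair ρ₁ ρ₂ (rnontriv ρ) (suppX x ∪ Sf))
    (ρ₁' ρ₂' : Ren) (h' : FreshPair ρ₁' ρ₂' (rnontriv ρ) (suppX x ∪ Sf)) :
    (ρ₂ * ρ) • f (ρ₁ • x) = (ρ₂' * ρ) • f (ρ₁' • x) :=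
  stmt8_general suppX hX f Sf hf ρ x ρ₁ ρ₂ h ρ₁' ρ₂' h'
end

section
/- For a supported renaming set X and distinct atoms a, a': [a]x = [a']x' iff a' ∉ supp(x) and [a↦a']·x = x', where [a]x = {(a,x)} ∪ {(b, [a↦b]·x) | b ∉ supp(x)}. -/
/-- Atoms-abstraction in a renaming set: `[a]x`. -/
def rabs {X : Type*} [MulAction Ren X] (supp : X → Set Atom) (a : Atom) (x : X) :
    Set (Atom × X) :=
  {p | p = (a, x)} ∪ {p | ∃ b, b ∉ supp x ∧ p = (b, atomRen a b • x)}

@[simp]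
theorem atomRen_apply (a b c : Atom) : (atomRen a b).1 c = if c = a then b else c := rfl

theorem atomRen_self (a : Atom) : atomRen a a = 1 :=
  Subtype.ext <| funext fun c => by by_cases h : c = a <;> simp [h] <;> rfl

section RenamingSet

variable {X : Type*} [MulAction Ren X] {supp : X → Set Atom}

theorem supp_smul_subset_image (hsupp : ∀ x, RIsLeastSupport (supp x) x) (ρ : Ren) (x : X) :
    supp (ρ • x) ⊆ ρ.1 '' supp x := by
  refine (hsupp _).2 _ fun σ σ' hσ => ?_
  rw [smul_smul, smul_smul]
  exact (hsupp x).1 _ _ fun c hc => hσ _ ⟨c, hc, rfl⟩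

theorem supp_atomRen_smul_subset (hsupp : ∀ x, RIsLeastSupport (supp x) x) (a b : Atom) (x : X) :
    supp (atomRen a b • x) ⊆ insert b (supp x \ {a}) := by
  refine (supp_smul_subset_image hsupp _ x).trans ?_
  rintro _ ⟨c, hc, rfl⟩
  by_cases h : c = a <;> simp [h, hc]

theorem atomRen_smul_atomRen_smul (hsupp : ∀ x, RIsLeastSupport (supp x) x) {a a' : Atom}
    {x : X} (ha' : a' ∉ supp x) (b : Atom) :
    atomRen a' b • atomRen a a' • x = atomRen a b • x := by
  rw [smul_smul]
  refine (hsupp x).1 _ _ fun c hc => ?_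
  have hca' : c ≠ a' := fun h => ha' (h ▸ hc)
  change (atomRen a' b).1 ((atomRen a a').1 c) = (atomRen a b).1 c
  by_cases h : c = a <;> simp [h, hca']

theorem atomRen_smul_atomRen_smul_self (hsupp : ∀ x, RIsLeastSupport (supp x) x) {a a' : Atom}
    {x : X} (ha' : a' ∉ supp x) : atomRen a' a • atomRen a a' • x = x := by
  rw [atomRen_smul_atomRen_smul hsupp ha', atomRen_self, one_smul]

theorem notMem_supp_atomRen_smul (hsupp : ∀ x, RIsLeastSupport (supp x) x) {a a' : Atom}
    (hne : a ≠ a') (x : X) : a ∉ supp (atomRen a a' • x) := fun h => by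
  rcases supp_atomRen_smul_subset hsupp a a' x h with h | ⟨-, h⟩
  · exact hne h
  · exact h rfl

theorem mk_mem_rabs (a : Atom) (x : X) : (a, x) ∈ rabs supp a x := Or.inl rfl

theorem mem_rabs_of_ne {a b : Atom} {x y : X} (h : (b, y) ∈ rabs supp a x) (hba : b ≠ a) :
    b ∉ supp x ∧ atomRen a b • x = y := by
  rcases h with h | ⟨c, hc, h⟩
  · exact absurd (congrArg Prod.fst h) hba
  · obtain ⟨rfl, rfl⟩ := Prod.mk.inj h
    exact ⟨hc, rfl⟩

theorem rabs_subset_rabs_atomRen_smul (hsupp : ∀ x, RIsLeastSupport (supp x) x) {a a' : Atom}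
    (hne : a ≠ a') {x : X} (ha' : a' ∉ supp x) :
    rabs supp a x ⊆ rabs supp a' (atomRen a a' • x) := by
  rintro _ (rfl | ⟨b, hb, rfl⟩)
  · exact Or.inr ⟨a, notMem_supp_atomRen_smul hsupp hne x,
      by rw [atomRen_smul_atomRen_smul_self hsupp ha']⟩
  · by_cases hba' : b = a'
    · subst hba'
      exact Or.inl rfl
    · have hb' : b ∉ supp (atomRen a a' • x) := fun h => by
        rcases supp_atomRen_smul_subset hsupp a a' x h with h | ⟨h, -⟩
        · exact hba' h
        · exact hb h
      exact Or.inr ⟨b, hb', by rw [atomRen_smul_atomRen_smul hsupp ha']⟩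

-- `a` is fresh for `[a ↦ a'] • x` and renaming it back recovers `x`, so the inclusion is symmetric.
theorem rabs_eq_rabs_atomRen_smul (hsupp : ∀ x, RIsLeastSupport (supp x) x) {a a' : Atom}
    (hne : a ≠ a') {x : X} (ha' : a' ∉ supp x) :
    rabs supp a x = rabs supp a' (atomRen a a' • x) := by
  refine (rabs_subset_rabs_atomRen_smul hsupp hne ha').antisymm ?_
  have h := rabs_subset_rabs_atomRen_smul hsupp hne.symm (notMem_supp_atomRen_smul hsupp hne x)
  rwa [atomRen_smul_atomRen_smul_self hsupp ha'] at h

end RenamingSet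

theorem stmt13 {X : Type*} [MulAction Ren X] (supp : X → Set Atom)
    (hsupp : ∀ x, RIsLeastSupport (supp x) x) (a a' : Atom) (hne : a ≠ a') (x x' : X) :
    rabs supp a x = rabs supp a' x' ↔ a' ∉ supp x ∧ atomRen a a' • x = x' := by
  constructor
  · intro h
    exact mem_rabs_of_ne (h ▸ mk_mem_rabs a' x') hne.symm
  · rintro ⟨ha', rfl⟩
    exact rabs_eq_rabs_atomRen_smul hsupp hne ha'
end
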